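/- arXiv:2212.14499 — 2 statements merged into one kernel-verified Lean document; each statement's English description precedes it below -/
import Mathlib

section
/- Let N ≥ 2, Φ = e^{πi/N}·diag(-1,1,…,1), and U_θ the rotation-by-θ matrix in the first two coordinates. Let a, b be the generators of the group G = ⟨a, b | (ab)^k a = (ba)^k b⟩. For θ ∈ [0, π/2], the assignment a ↦ Φ, b ↦ U_θ Φ U_{-θ} extends to a group homomorphism G → SU(N) if and only if (2k+1)θ ∈ πℤ. -/
/-- The rotation by `θ` in the first two coordinates of `ℂ^{n+2}`, an element of
`SU(n+2)`. -/
noncomputable def Urot (n : ℕ) (θ : ℝ) : Matrix (Fin (n + 2)) (Fin (n + 2)) ℂ :=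
  fun i j =>
    if i = 0 ∧ j = 0 then (Real.cos θ : ℂ)
    else if i = 0 ∧ j = 1 then (-Real.sin θ : ℂ)
    else if i = 1 ∧ j = 0 then (Real.sin θ : ℂ)
    else if i = 1 ∧ j = 1 then (Real.cos θ : ℂ)
    else if i = j then 1 else 0

/-- The single relator `(ab)^k a ((ba)^k b)⁻¹` of the torus knot group
`G = ⟨a, b | (ab)^k a = (ba)^k b⟩ = π₁(ℝ³ \ T(2,2k+1))`. -/
def torusRel (k : ℕ) : Set (FreeGroup (Fin 2)) :=
  {(FreeGroup.of 0 * FreeGroup.of 1) ^ k * FreeGroup.of 0 *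
    ((FreeGroup.of 1 * FreeGroup.of 0) ^ k * FreeGroup.of 1)⁻¹}

/-!
Write `Φ = c • D` with `D = diag(-1, 1, …, 1)` and `c = exp(πi/N)`, so `cᴺ = -1` and `Φ ∈ SU(N)`.
Conjugation by `D`, hence by `Φ`, inverts `U_θ`, so inside `U(N)` the relation
`(ab)^k a = (ba)^k b` for `a = Φ`, `b = U_θ Φ U_θ⁻¹` is equivalent to `U_θ^(4k+2) = 1`, i.e. to
`cos((4k+2)θ) = 1`. A homomorphism out of the one-relator group exists exactly when the images
satisfy the relation.
-/

theorem PresentedGroup.exists_extension_iff {α G : Type*} [Group G] {rels : Set (FreeGroup α)}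
    (f : α → G) :
    (∃ φ : PresentedGroup rels →* G, ∀ a, φ (of a) = f a) ↔ ∀ r ∈ rels, FreeGroup.lift f r = 1 := by
  refine ⟨fun ⟨φ, hφ⟩ r hr => ?_, fun h => ⟨toGroup h, fun _ => toGroup.of h⟩⟩
  have hlift : φ.comp (mk rels) = FreeGroup.lift f :=
    FreeGroup.ext_hom _ _ fun a => by rw [FreeGroup.lift_apply_of]; exact hφ a
  rw [← hlift, MonoidHom.comp_apply, one_of_mem hr, map_one]

def TorusRelation {M : Type*} [Monoid M] (k : ℕ) (x y : M) : Prop :=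
  (x * y) ^ k * x = (y * x) ^ k * y

theorem TorusRelation.map_iff {M N : Type*} [Monoid M] [Monoid N] {f : M →* N}
    (hf : Function.Injective f) {k : ℕ} {x y : M} :
    TorusRelation k (f x) (f y) ↔ TorusRelation k x y := by
  simp only [TorusRelation, ← map_mul, ← map_pow, hf.eq_iff]

theorem torusRelation_conj_iff {G : Type*} [Group G] {d u : G} (h : d * u = u⁻¹ * d) (k : ℕ) :
    TorusRelation k d (u * d * u⁻¹) ↔ u ^ (4 * k + 2) = 1 := by
  -- `d²` commutes with `u`, so both sides become a power of `u` times `d^(2k+1)`.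
  have hsemi : SemiconjBy d u u⁻¹ := h
  have hinv : SemiconjBy d u⁻¹ u := by simpa using hsemi.inv_right
  have he : Commute (u ^ 2) (d * d) := ((hinv.mul_left hsemi : Commute (d * d) u).pow_right 2).symm
  have hb : u * d * u⁻¹ = u ^ 2 * d := by rw [mul_assoc, hinv.eq, ← mul_assoc, sq]
  have hab : d * (u ^ 2 * d) = (u ^ 2)⁻¹ * (d * d) := by
    rw [← mul_assoc, (hsemi.pow_right 2).eq, inv_pow, mul_assoc]
  have hlhs : (d * (u ^ 2 * d)) ^ k * d = (u ^ 2)⁻¹ ^ k * ((d * d) ^ k * d) := by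
    rw [hab, he.inv_left.mul_pow, mul_assoc]
  have hrhs : (u ^ 2 * d * d) ^ k * (u ^ 2 * d) = (u ^ 2) ^ k * u ^ 2 * ((d * d) ^ k * d) := by
    rw [mul_assoc (u ^ 2), he.mul_pow, mul_assoc, ← mul_assoc _ (u ^ 2), ← (he.pow_right k).eq,
      mul_assoc, mul_assoc]
  rw [TorusRelation, hb, hlhs, hrhs, mul_left_inj, inv_pow, inv_eq_iff_mul_eq_one, ← pow_succ,
    ← pow_add, ← pow_mul]
  ring_nf

theorem exists_torusKnotGroup_hom_iff {G : Type*} [Group G] (k : ℕ) (x y : G) :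
    (∃ φ : PresentedGroup (torusRel k) →* G, φ (.of 0) = x ∧ φ (.of 1) = y) ↔
      TorusRelation k x y := by
  simpa [Fin.forall_fin_two, torusRel, TorusRelation, ← mul_inv_rev, mul_inv_eq_one] using
    PresentedGroup.exists_extension_iff (rels := torusRel k) ![x, y]

section Matrices

open Matrix

variable {n : ℕ}

theorem Urot_eq_one_iff (ψ : ℝ) : Urot n ψ = 1 ↔ Real.cos ψ = 1 := by
  refine ⟨fun h => by simpa [Urot, ← Complex.ofReal_cos] using congrFun₂ h 0 0, fun h => ?_⟩
  have hsin : Real.sin ψ = 0 := by nlinarith [Real.sin_sq_add_cos_sq ψ]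
  ext i j
  refine Fin.cases ?_ (Fin.cases ?_ fun i => ?_) i <;>
    refine Fin.cases ?_ (Fin.cases ?_ fun j => ?_) j <;>
    simp [Urot, Matrix.one_apply, h, hsin, Fin.succ_succ_ne_one, (Fin.succ_succ_ne_one _).symm,
      (Fin.succ_ne_zero _).symm]

theorem Urot_zero : Urot n 0 = 1 :=
  (Urot_eq_one_iff 0).2 Real.cos_zero

theorem Urot_add (s t : ℝ) : Urot n (s + t) = Urot n s * Urot n t := by
  ext i j
  simp only [Matrix.mul_apply, Fin.sum_univ_succ (n := n + 1), Fin.sum_univ_succ (n := n)]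
  refine Fin.cases ?_ (Fin.cases ?_ fun i => ?_) i <;>
    refine Fin.cases ?_ (Fin.cases ?_ fun j => ?_) j <;>
    simp [Urot, Real.cos_add, Real.sin_add, Fin.succ_succ_ne_one, (Fin.succ_succ_ne_one _).symm,
      (Fin.succ_ne_zero _).symm, eq_comm] <;> ring

theorem star_Urot (θ : ℝ) : star (Urot n θ) = Urot n (-θ) := by
  ext i j
  refine Fin.cases ?_ (Fin.cases ?_ fun i => ?_) i <;>
    refine Fin.cases ?_ (Fin.cases ?_ fun j => ?_) j <;>
    simp [Urot, Matrix.star_apply, Fin.succ_succ_ne_one, (Fin.succ_succ_ne_one _).symm,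
      (Fin.succ_ne_zero _).symm, eq_comm, -Complex.ofReal_cos, -Complex.ofReal_sin,
      Complex.conj_ofReal]

theorem Urot_pow (θ : ℝ) (m : ℕ) : Urot n θ ^ m = Urot n (m * θ) := by
  induction m with
  | zero => simp [Urot_zero]
  | succ m ih => rw [pow_succ, ih, ← Urot_add]; push_cast; ring_nf

theorem Urot_mem_unitaryGroup (θ : ℝ) : Urot n θ ∈ unitaryGroup (Fin (n + 2)) ℂ := by
  rw [mem_unitaryGroup_iff', star_Urot, ← Urot_add, neg_add_cancel, Urot_zero]

def flipFirst (n : ℕ) : Matrix (Fin (n + 2)) (Fin (n + 2)) ℂ :=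
  diagonal fun i => if (i : ℕ) = 0 then -1 else 1

theorem flipFirst_mul_self : flipFirst n * flipFirst n = 1 := by
  rw [flipFirst, diagonal_mul_diagonal, ← diagonal_one]
  congr 1
  ext i
  split_ifs <;> norm_num

theorem star_flipFirst : star (flipFirst n) = flipFirst n := by
  rw [flipFirst, star_eq_conjTranspose, diagonal_conjTranspose]
  congr 1
  ext i
  by_cases h : i = 0 <;> simp [h]

theorem det_flipFirst : (flipFirst n).det = -1 := by
  rw [flipFirst, det_diagonal, Fin.prod_univ_succ]
  simp

theorem flipFirst_mul_Urot (θ : ℝ) : flipFirst n * Urot n θ = Urot n (-θ) * flipFirst n := by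
  ext i j
  rw [flipFirst, diagonal_mul, mul_diagonal]
  refine Fin.cases ?_ (Fin.cases ?_ fun i => ?_) i <;>
    refine Fin.cases ?_ (Fin.cases ?_ fun j => ?_) j <;>
    simp [Urot, Fin.succ_succ_ne_one, (Fin.succ_succ_ne_one _).symm, (Fin.succ_ne_zero _).symm]

noncomputable def Phi (n : ℕ) : Matrix (Fin (n + 2)) (Fin (n + 2)) ℂ :=
  Complex.exp (Real.pi * Complex.I / ((n : ℂ) + 2)) • flipFirst n

theorem Phi_mem_unitaryGroup : Phi n ∈ unitaryGroup (Fin (n + 2)) ℂ := by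
  refine Unitary.smul_mem_of_mem ?_ ?_
  · rw [Unitary.mem_iff_star_mul_self, Complex.star_def, ← Complex.exp_conj, ← Complex.exp_add]
    simp [map_ofNat, neg_div]
  · rw [Unitary.mem_iff, star_flipFirst, flipFirst_mul_self, and_self]

theorem det_Phi : (Phi n).det = 1 := by
  rw [Phi, det_smul, det_flipFirst, Fintype.card_fin, ← Complex.exp_nat_mul, Nat.cast_add,
    Nat.cast_two, mul_div_cancel₀ _ (by norm_cast), Complex.exp_pi_mul_I]
  norm_num

theorem Phi_mul_Urot (θ : ℝ) : Phi n * Urot n θ = Urot n (-θ) * Phi n := by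
  rw [Phi, smul_mul_assoc, flipFirst_mul_Urot, mul_smul_comm]

theorem Phi_mem_specialUnitaryGroup : Phi n ∈ specialUnitaryGroup (Fin (n + 2)) ℂ :=
  mem_specialUnitaryGroup_iff.2 ⟨Phi_mem_unitaryGroup, det_Phi⟩

theorem Urot_mul_Phi_mul_Urot_mem_specialUnitaryGroup (θ : ℝ) :
    Urot n θ * Phi n * Urot n (-θ) ∈ specialUnitaryGroup (Fin (n + 2)) ℂ := by
  refine mem_specialUnitaryGroup_iff.2 ⟨mul_mem (mul_mem (Urot_mem_unitaryGroup θ)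
    Phi_mem_unitaryGroup) (Urot_mem_unitaryGroup (-θ)), ?_⟩
  rw [det_mul, det_mul, mul_right_comm, ← det_mul, ← Urot_add, add_neg_cancel, Urot_zero, det_one,
    one_mul, det_Phi]

theorem torusRelation_Phi_iff (k : ℕ) (θ : ℝ) :
    TorusRelation k (Phi n) (Urot n θ * Phi n * Urot n (-θ)) ↔
      ∃ z : ℤ, (2 * (k : ℝ) + 1) * θ = z * Real.pi := by
  obtain ⟨p, hp⟩ : ∃ p : unitaryGroup (Fin (n + 2)) ℂ, (p : Matrix _ _ ℂ) = Phi n :=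
    ⟨⟨_, Phi_mem_unitaryGroup⟩, rfl⟩
  obtain ⟨u, hu⟩ : ∃ u : unitaryGroup (Fin (n + 2)) ℂ, (u : Matrix _ _ ℂ) = Urot n θ :=
    ⟨⟨_, Urot_mem_unitaryGroup θ⟩, rfl⟩
  have hu_inv : ((u⁻¹ : unitaryGroup (Fin (n + 2)) ℂ) : Matrix _ _ ℂ) = Urot n (-θ) := by
    rw [← star_Urot, ← hu]; rfl
  have hconj : p * u = u⁻¹ * p := by
    rw [← Subtype.val_inj, Submonoid.coe_mul, Submonoid.coe_mul, hp, hu, hu_inv, Phi_mul_Urot]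
  calc TorusRelation k (Phi n) (Urot n θ * Phi n * Urot n (-θ))
      ↔ TorusRelation k p (u * p * u⁻¹) := by
        rw [← TorusRelation.map_iff (unitaryGroup _ _).subtype_injective, Submonoid.coe_subtype,
          Submonoid.coe_mul, Submonoid.coe_mul, hp, hu, hu_inv]
    _ ↔ u ^ (4 * k + 2) = 1 := torusRelation_conj_iff hconj k
    _ ↔ Real.cos ((4 * k + 2 : ℕ) * θ) = 1 := by
        rw [← Urot_eq_one_iff, ← Urot_pow, ← hu, ← Subtype.val_inj, SubmonoidClass.coe_pow,
          OneMemClass.coe_one]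
    _ ↔ ∃ z : ℤ, (2 * (k : ℝ) + 1) * θ = z * Real.pi := by
        rw [Real.cos_eq_one_iff]
        push_cast
        constructor <;> rintro ⟨z, hz⟩ <;> exact ⟨z, by linarith⟩

end Matrices

theorem stmt_9_general (n k : ℕ) (θ : ℝ)
    (Φ : Matrix (Fin (n + 2)) (Fin (n + 2)) ℂ)
    (hΦ : Φ = Complex.exp (Real.pi * Complex.I / ((n : ℂ) + 2)) •
      Matrix.diagonal (fun i : Fin (n + 2) => if (i : ℕ) = 0 then (-1 : ℂ) else 1)) :
    (∃ φ : PresentedGroup (torusRel k) →*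
        ↥(Matrix.specialUnitaryGroup (Fin (n + 2)) ℂ),
      ((φ (PresentedGroup.of 0) : Matrix (Fin (n + 2)) (Fin (n + 2)) ℂ) = Φ ∧
       (φ (PresentedGroup.of 1) : Matrix (Fin (n + 2)) (Fin (n + 2)) ℂ) =
         Urot n θ * Φ * Urot n (-θ))) ↔
      ∃ z : ℤ, (2 * (k : ℝ) + 1) * θ = z * Real.pi := by
  obtain rfl : Φ = Phi n := hΦ
  rw [← torusRelation_Phi_iff]
  constructor
  · rintro ⟨φ, h0, h1⟩
    have hrel := (exists_torusKnotGroup_hom_iff k _ _).1 ⟨φ, rfl, rfl⟩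
    rwa [← TorusRelation.map_iff (Matrix.specialUnitaryGroup _ _).subtype_injective,
      Submonoid.coe_subtype, h0, h1] at hrel
  · intro h
    obtain ⟨φ, h0, h1⟩ := (exists_torusKnotGroup_hom_iff k
      (⟨_, Phi_mem_specialUnitaryGroup⟩ : Matrix.specialUnitaryGroup (Fin (n + 2)) ℂ)
      ⟨_, Urot_mul_Phi_mul_Urot_mem_specialUnitaryGroup θ⟩).2
      ((TorusRelation.map_iff (Matrix.specialUnitaryGroup _ _).subtype_injective).1 h)
    exact ⟨φ, congrArg Subtype.val h0, congrArg Subtype.val h1⟩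

/-- With `N = n+2 ≥ 2` and `θ ∈ [0,π/2]`, the assignment `a ↦ Φ`,
`b ↦ U_θ Φ U_{-θ}` extends to a group homomorphism `⟨a,b | (ab)^k a = (ba)^k b⟩ → SU(N)`
if and only if `(2k+1)θ ∈ πℤ`. -/
theorem stmt_9 (n k : ℕ) (θ : ℝ) (hθ : θ ∈ Set.Icc 0 (Real.pi / 2))
    (Φ : Matrix (Fin (n + 2)) (Fin (n + 2)) ℂ)
    (hΦ : Φ = Complex.exp (Real.pi * Complex.I / ((n : ℂ) + 2)) •
      Matrix.diagonal (fun i : Fin (n + 2) => if (i : ℕ) = 0 then (-1 : ℂ) else 1)) :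
    (∃ φ : PresentedGroup (torusRel k) →*
        ↥(Matrix.specialUnitaryGroup (Fin (n + 2)) ℂ),
      ((φ (PresentedGroup.of 0) : Matrix (Fin (n + 2)) (Fin (n + 2)) ℂ) = Φ ∧
       (φ (PresentedGroup.of 1) : Matrix (Fin (n + 2)) (Fin (n + 2)) ℂ) =
         Urot n θ * Φ * Urot n (-θ))) ↔
      ∃ z : ℤ, (2 * (k : ℝ) + 1) * θ = z * Real.pi :=
  stmt_9_general n k θ Φ hΦ
end

section
/- For N ≥ 1, the abelian group obtained as the homology of the two-term complex ℤ[X]/(X^N) → ℤ[X]/(X^N) given by multiplication by N·X^{N-1} is isomorphic to ℤ^{2N-2} ⊕ ℤ/N (i.e. kernel ⊕ cokernel ≅ ℤ^{2N-2} ⊕ ℤ/N). -/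
/-!
In the basis `1, X, …, X^(N-1)` of `ℤ[X]/(X^N)`, multiplication by `N·X^(N-1)` sends `1` to
`N·X^(N-1)` and kills every other basis vector. Splitting off the constant coefficient in the
source and the top coefficient in the target, it becomes `(N ·) × 0` on `ℤ × ℤ^(N-1)`, whose
kernel is `ℤ^(N-1)` and whose cokernel is `ℤ/N × ℤ^(N-1)`.
-/

open Polynomial LinearMap

namespace LinearMap

variable {R M N M₁ N₁ : Type*} [Ring R] [AddCommGroup M] [AddCommGroup N] [AddCommGroup M₁]
  [AddCommGroup N₁] [Module R M] [Module R N] [Module R M₁] [Module R N₁]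

section CommSq

variable {f : M →ₗ[R] N} {g : M₁ →ₗ[R] N₁} (e₁ : M ≃ₗ[R] M₁) (e₂ : N ≃ₗ[R] N₁)

noncomputable def kerEquivOfCommSq (h : e₂.toLinearMap ∘ₗ f = g ∘ₗ e₁.toLinearMap) :
    ker f ≃ₗ[R] ker g :=
  (e₁.submoduleMap (ker f)).trans <| LinearEquiv.ofEq _ _ <| by
    rw [← LinearEquiv.ker_comp e₂ f, h, ker_comp]
    exact Submodule.map_comap_eq_of_surjective e₁.surjective _

def cokerEquivOfCommSq (h : e₂.toLinearMap ∘ₗ f = g ∘ₗ e₁.toLinearMap) :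
    (N ⧸ range f) ≃ₗ[R] N₁ ⧸ range g :=
  Submodule.Quotient.equiv _ _ e₂ <| by
    rw [← range_comp, h, range_comp_of_range_eq_top _ e₁.range]

end CommSq

theorem ker_prodMap_zero_of_injective {g : M →ₗ[R] M₁} (hg : Function.Injective g) :
    ker (g.prodMap (0 : N →ₗ[R] N₁)) = range (inr R M N) := by
  rw [ker_prodMap, ker_eq_bot.mpr hg, ker_zero]
  ext ⟨x, y⟩
  simp [eq_comm]

noncomputable def kerProdMapZeroEquiv {g : M →ₗ[R] M₁} (hg : Function.Injective g) :
    ker (g.prodMap (0 : N →ₗ[R] N₁)) ≃ₗ[R] N :=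
  (LinearEquiv.ofEq _ _ (ker_prodMap_zero_of_injective hg)).trans
    (LinearEquiv.ofInjective _ inr_injective).symm

noncomputable def cokerProdMapEquiv (f : M →ₗ[R] M₁) (g : N →ₗ[R] N₁) :
    ((M₁ × N₁) ⧸ range (f.prodMap g)) ≃ₗ[R] (M₁ ⧸ range f) × (N₁ ⧸ range g) :=
  (Submodule.quotEquivOfEq _ _ <| by
      rw [range_prodMap, ker_prodMap, Submodule.ker_mkQ, Submodule.ker_mkQ]).trans <|
    quotKerEquivOfSurjective _ <|
      (Submodule.mkQ_surjective _).prodMap (Submodule.mkQ_surjective _)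

end LinearMap

section HeadTail

variable {A M : Type*} [CommRing A] [AddCommGroup M] [Module A M] {n : ℕ}

noncomputable def Module.Basis.headTailEquiv (b : Module.Basis (Fin (n + 1)) A M) :
    M ≃ₗ[A] A × (Fin n → A) :=
  b.equivFun.trans (Fin.consLinearEquiv A fun _ => A).symm

theorem Module.Basis.headTailEquiv_apply_zero (b : Module.Basis (Fin (n + 1)) A M) :
    b.headTailEquiv (b 0) = (1, 0) := by
  ext j
  · simp [headTailEquiv]
  · simp [headTailEquiv, Fin.tail]

theorem Module.Basis.headTailEquiv_apply_succ (b : Module.Basis (Fin (n + 1)) A M) (i : Fin n) :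
    b.headTailEquiv (b i.succ) = (0, Pi.single i 1) := by
  ext j
  · simp [headTailEquiv, Fin.succ_ne_zero]
  · simp [headTailEquiv, Fin.tail, Finsupp.single_apply, Pi.single_apply, eq_comm]

end HeadTail

namespace AdjoinRoot

variable (A : Type*) [CommRing A] [Nontrivial A] (n : ℕ)

noncomputable def basisXPow : Module.Basis (Fin (n + 1)) A (AdjoinRoot (X ^ (n + 1) : A[X])) :=
  (powerBasis' (monic_X_pow (n + 1))).basis.reindex (finCongr (natDegree_X_pow (n + 1)))

variable {A n}

theorem basisXPow_apply (i : Fin (n + 1)) :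
    basisXPow A n i = root (X ^ (n + 1) : A[X]) ^ (i : ℕ) := by
  simp only [basisXPow, Module.Basis.reindex_apply, PowerBasis.coe_basis, powerBasis'_gen]
  rfl

/-- Reindexing by `finRotate` moves the coefficient of `X ^ n` into the head position. -/
theorem headTailEquiv_comp_mulLeft_C_mul_X_pow (a : A) :
    ((basisXPow A n).reindex (finRotate (n + 1))).headTailEquiv.toLinearMap ∘ₗ
        mulLeft A (mk (X ^ (n + 1)) (C a * X ^ n)) =
      (toSpanSingleton A A a).prodMap 0 ∘ₗ (basisXPow A n).headTailEquiv.toLinearMap := by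
  refine (basisXPow A n).ext fun i => i.cases ?_ fun j => ?_
  · have hlast : (basisXPow A n).reindex (finRotate (n + 1)) 0 = basisXPow A n (Fin.last n) := by
      rw [Module.Basis.reindex_apply, (Equiv.symm_apply_eq _).mpr finRotate_last.symm]
    have h : mk (X ^ (n + 1)) (C a * X ^ n) * basisXPow A n 0 =
        a • (basisXPow A n).reindex (finRotate (n + 1)) 0 := by
      simp [hlast, basisXPow_apply, Algebra.smul_def]
    simp only [comp_apply, LinearEquiv.coe_coe, mulLeft_apply, h, map_smul,
      Module.Basis.headTailEquiv_apply_zero]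
    simp
  · have h : mk (X ^ (n + 1)) (C a * X ^ n) * basisXPow A n j.succ = 0 := by
      rw [basisXPow_apply, ← mk_X, ← map_pow, ← map_mul, mk_eq_zero, mul_assoc, ← pow_add]
      exact (pow_dvd_pow X (by rw [Fin.val_succ]; omega)).mul_left _
    simp only [comp_apply, LinearEquiv.coe_coe, mulLeft_apply, h, map_zero,
      Module.Basis.headTailEquiv_apply_succ]
    simp [Prod.zero_eq_mk]

variable (n)

noncomputable def kerMulCXPowEquiv {a : A} (ha : IsRightRegular a) :
    ker (mulLeft A (mk (X ^ (n + 1) : A[X]) (C a * X ^ n))) ≃ₗ[A] (Fin n → A) :=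
  (kerEquivOfCommSq _ _ (headTailEquiv_comp_mulLeft_C_mul_X_pow a)).trans
    (kerProdMapZeroEquiv ha)

noncomputable def cokerMulCXPowEquiv (a : A) :
    (AdjoinRoot (X ^ (n + 1) : A[X]) ⧸ range (mulLeft A (mk (X ^ (n + 1) : A[X]) (C a * X ^ n))))
      ≃ₗ[A] (A ⧸ Ideal.span {a}) × (Fin n → A) :=
  (cokerEquivOfCommSq _ _ (headTailEquiv_comp_mulLeft_C_mul_X_pow a)).trans <|
    (cokerProdMapEquiv _ _).trans <|
      (Submodule.quotEquivOfEq _ _ (range_toSpanSingleton a)).prodCongr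
        (Submodule.quotEquivOfEqBot _ range_zero)

end AdjoinRoot

/-- For `N ≥ 1`, the homology of the two-term complex
`ℤ[X]/(X^N) → ℤ[X]/(X^N)` given by multiplication by `N·X^{N-1}`, i.e. the direct sum of
the kernel and the cokernel, is isomorphic to `ℤ^{2N-2} ⊕ ℤ/N`. -/
theorem stmt_11 (N : ℕ) (hN : 1 ≤ N) :
    Nonempty
      ((↥(LinearMap.ker (LinearMap.mulLeft ℤ
          (Ideal.Quotient.mk (Ideal.span {(X : Polynomial ℤ) ^ N})
            (C (N : ℤ) * X ^ (N - 1))))) ×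
        ((Polynomial ℤ ⧸ Ideal.span {(X : Polynomial ℤ) ^ N}) ⧸
          LinearMap.range (LinearMap.mulLeft ℤ
            (Ideal.Quotient.mk (Ideal.span {(X : Polynomial ℤ) ^ N})
              (C (N : ℤ) * X ^ (N - 1)))))) ≃ₗ[ℤ]
        (Fin (2 * N - 2) → ℤ) × ZMod N) := by
  obtain ⟨n, rfl⟩ := Nat.exists_eq_add_of_le' hN
  have hreg : IsRightRegular ((n + 1 : ℕ) : ℤ) := (IsRegular.of_ne_zero (by omega)).right
  let zmod : (ℤ ⧸ Ideal.span {((n + 1 : ℕ) : ℤ)}) ≃ₗ[ℤ] ZMod (n + 1) :=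
    (Int.quotientSpanNatEquivZMod (n + 1)).toAddEquiv.toIntLinearEquiv
  let fin : ((Fin n → ℤ) × (Fin n → ℤ)) ≃ₗ[ℤ] (Fin (2 * (n + 1) - 2) → ℤ) :=
    (LinearEquiv.sumArrowLequivProdArrow _ _ ℤ ℤ).symm.trans <|
      LinearEquiv.funCongrLeft ℤ ℤ <| (finCongr (by omega)).trans finSumFinEquiv.symm
  exact ⟨((AdjoinRoot.kerMulCXPowEquiv n hreg).prodCongr
    ((AdjoinRoot.cokerMulCXPowEquiv n _).trans (zmod.prodCongr (LinearEquiv.refl ℤ _)))).trans <|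
      ((LinearEquiv.refl ℤ _).prodCongr (LinearEquiv.prodComm ℤ _ _)).trans <|
        (LinearEquiv.prodAssoc ℤ _ _ _).symm.trans (fin.prodCongr (LinearEquiv.refl ℤ _))⟩
end
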